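/- For all real x > 0, Γ(x+1) < (x^x/e^x)·√(2πx)·exp(ψ'(x)/12). -/

import Mathlib

/-!
Write `log Γ(x + 1) = (x + 1/2) log x - x + log (2π) / 2 + μ(x)` with Binet's function `μ`.
The series `log (1 + 1/x) = 2 ∑ₖ (2x + 1)^(-(2k+1)) / (2k + 1)` gives Robbins' bound
`μ(x) - μ(x + 1) ≤ 1 / (12 x (x + 1)) = 1/(12x) - 1/(12(x + 1))`, and `μ(x + n) → 0` by Stirling's
formula for `n!` combined with Euler's limit formula for `Γ`; hence `μ(x) ≤ 1/(12x)`.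
On the other side `ψ'(x) - ψ'(x + 1) = 1/x² ≥ 1/x - 1/(x + 1)` and `ψ' ≥ 0` (log-convexity of `Γ`),
so `ψ'(x) ≥ 1/x`, and then `ψ'(x) = 1/x² + ψ'(x + 1) ≥ 1/x² + 1/(x + 1) > 1/x`.
-/

open Real Filter Topology Asymptotics

noncomputable def trigamma (x : ℝ) : ℝ :=
  iteratedDeriv 2 (fun y => Real.log (Real.Gamma y)) x

open Set

lemma log_Gamma_add_one {x : ℝ} (hx : 0 < x) :
    log (Gamma (x + 1)) = log (Gamma x) + log x := by
  rw [Gamma_add_one hx.ne', log_mul hx.ne' (Gamma_pos_of_pos hx).ne', add_comm]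

lemma contDiffAt_Gamma {x : ℝ} (hx : 0 < x) (n : WithTop ℕ∞) : ContDiffAt ℝ n Gamma x := by
  have hopen : IsOpen {s : ℂ | 0 < s.re} := isOpen_lt continuous_const Complex.continuous_re
  have hdiff : DifferentiableOn ℂ Complex.Gamma {s : ℂ | 0 < s.re} := fun s hs =>
    (Complex.differentiableAt_Gamma s fun m hm => by
      simp only [mem_ofPred_eq, hm, Complex.neg_re, Complex.natCast_re] at hs
      linarith [m.cast_nonneg (α := ℝ)]).differentiableWithinAt
  have := ((hdiff.contDiffOn hopen (n := n)).contDiffAt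
    (hopen.mem_nhds (by simpa using hx))).real_of_complex
  simpa [Complex.Gamma_ofReal] using this

lemma contDiffOn_log_Gamma (n : WithTop ℕ∞) :
    ContDiffOn ℝ n (fun y => log (Gamma y)) (Ioi 0) := fun _ hy =>
  ((contDiffAt_Gamma hy n).log (Gamma_pos_of_pos hy).ne').contDiffWithinAt

lemma differentiableAt_log_Gamma {x : ℝ} (hx : 0 < x) :
    DifferentiableAt ℝ (fun y => log (Gamma y)) x :=
  ((contDiffOn_log_Gamma 1).differentiableOn one_ne_zero).differentiableAt (Ioi_mem_nhds hx)

lemma differentiableAt_deriv_log_Gamma {x : ℝ} (hx : 0 < x) :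
    DifferentiableAt ℝ (deriv fun y => log (Gamma y)) x := by
  have := ((contDiffOn_succ_iff_deriv_of_isOpen (n := 1) isOpen_Ioi).mp
    (contDiffOn_log_Gamma 2)).2.2
  exact (this.differentiableOn one_ne_zero).differentiableAt (Ioi_mem_nhds hx)

lemma deriv_log_Gamma_add_one {x : ℝ} (hx : 0 < x) :
    deriv (fun y => log (Gamma y)) (x + 1) = deriv (fun y => log (Gamma y)) x + x⁻¹ := by
  have hfeq : (fun y => log (Gamma (y + 1))) =ᶠ[𝓝 x] fun y => log (Gamma y) + log y := by
    filter_upwards [Ioi_mem_nhds hx] with y hy using log_Gamma_add_one hy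
  rw [← deriv_comp_add_const, hfeq.deriv_eq,
    deriv_fun_add (differentiableAt_log_Gamma hx) (differentiableAt_log hx.ne'), deriv_log]

lemma trigamma_eq_deriv_deriv (x : ℝ) :
    trigamma x = deriv (deriv fun y => log (Gamma y)) x := by
  rw [trigamma, iteratedDeriv_succ, iteratedDeriv_one]

lemma trigamma_add_one {x : ℝ} (hx : 0 < x) : trigamma (x + 1) = trigamma x - (x ^ 2)⁻¹ := by
  have hfeq : (fun y => deriv (fun y => log (Gamma y)) (y + 1)) =ᶠ[𝓝 x]
      fun y => deriv (fun y => log (Gamma y)) y + y⁻¹ := by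
    filter_upwards [Ioi_mem_nhds hx] with y hy using deriv_log_Gamma_add_one hy
  rw [trigamma_eq_deriv_deriv, trigamma_eq_deriv_deriv, ← deriv_comp_add_const, hfeq.deriv_eq,
    deriv_fun_add (differentiableAt_deriv_log_Gamma hx) (differentiableAt_inv hx.ne'), deriv_inv]
  ring

lemma trigamma_nonneg {x : ℝ} (hx : 0 < x) : 0 ≤ trigamma x := by
  have hmono : MonotoneOn (deriv fun y => log (Gamma y)) (Ioi 0) :=
    convexOn_log_Gamma.monotoneOn_deriv fun _ hy => differentiableAt_log_Gamma hy
  rw [trigamma_eq_deriv_deriv, ← derivWithin_of_isOpen isOpen_Ioi hx]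
  exact hmono.derivWithin_nonneg

lemma inv_le_trigamma {x : ℝ} (hx : 0 < x) : x⁻¹ ≤ trigamma x := by
  have hpos (n : ℕ) : 0 < x + n := by positivity
  have hmono : Monotone fun n : ℕ => (x + n)⁻¹ - trigamma (x + n) := by
    refine monotone_nat_of_le_succ fun n => ?_
    have hy := hpos n
    push_cast
    rw [← add_assoc, trigamma_add_one hy]
    have : (x + n)⁻¹ - (x + n + 1)⁻¹ ≤ ((x + n) ^ 2)⁻¹ := by
      rw [inv_sub_inv hy.ne' (by positivity), add_sub_cancel_left, ← one_div, sq]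
      exact one_div_le_one_div_of_le (by positivity) (by nlinarith)
    linarith
  have hlim : Tendsto (fun n : ℕ => (x + n)⁻¹) atTop (𝓝 0) :=
    tendsto_inv_atTop_zero.comp (tendsto_atTop_add_const_left _ x tendsto_natCast_atTop_atTop)
  have := ge_of_tendsto hlim (Eventually.of_forall fun n =>
    (hmono (Nat.zero_le n)).trans (sub_le_self _ (trigamma_nonneg (hpos n))))
  simpa using this

lemma inv_lt_trigamma {x : ℝ} (hx : 0 < x) : x⁻¹ < trigamma x := by
  have h := trigamma_add_one hx
  have h1 := inv_le_trigamma (show 0 < x + 1 by linarith)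
  have h2 : x⁻¹ < (x + 1)⁻¹ + (x ^ 2)⁻¹ := by
    rw [← sub_lt_iff_lt_add', inv_sub_inv hx.ne' (by positivity), add_sub_cancel_left, ← one_div,
      sq]
    exact one_div_lt_one_div_of_lt (by positivity) (by nlinarith)
  linarith

noncomputable def binet (x : ℝ) : ℝ :=
  log (Gamma x) - (x - 1 / 2) * log x + x - log (2 * π) / 2

lemma binet_sub_binet_add_one {x : ℝ} (hx : 0 < x) :
    binet x - binet (x + 1) = (x + 1 / 2) * log (1 + x⁻¹) - 1 := by
  have : log (1 + x⁻¹) = log (x + 1) - log x := by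
    rw [← log_div (by positivity) hx.ne', add_div, div_self hx.ne', one_div]
  rw [binet, binet, log_Gamma_add_one hx, this]
  ring

lemma hasSum_binet_sub_binet_add_one {x : ℝ} (hx : 0 < x) :
    HasSum (fun k : ℕ => 1 / (2 * ((k + 1 : ℕ) : ℝ) + 1) * ((1 / (2 * x + 1)) ^ 2) ^ (k + 1))
      (binet x - binet (x + 1)) := by
  let f (k : ℕ) : ℝ := 1 / (2 * k + 1) * ((1 / (2 * x + 1)) ^ 2) ^ k
  change HasSum (fun k => f (k + 1)) _
  have hf : HasSum f ((x + 1 / 2) * log (1 + x⁻¹)) := by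
    convert! (hasSum_log_one_add_inv hx).mul_left (x + 1 / 2) using 2 with k
    dsimp only [f]
    rw [pow_succ _ (2 * k), pow_mul]
    field_simp
  rw [hasSum_nat_add_iff, binet_sub_binet_add_one hx]
  simpa [f] using hf

lemma binet_sub_binet_add_one_le {x : ℝ} (hx : 0 < x) :
    binet x - binet (x + 1) ≤ 1 / (12 * x * (x + 1)) := by
  obtain ⟨r, hr⟩ : ∃ r, r = (1 / (2 * x + 1)) ^ 2 := ⟨_, rfl⟩
  have hr0 : 0 ≤ r := hr ▸ by positivity
  have hr1 : r < 1 := by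
    rw [hr, div_pow, one_pow, div_lt_one (by positivity)]; nlinarith
  have hgeom : HasSum (fun k : ℕ => r ^ (k + 1) / 3) (r / (1 - r) / 3) := by
    convert! ((hasSum_geometric_of_lt_one hr0 hr1).mul_right r).div_const 3 using 1
    ring
  have hsum : r / (1 - r) / 3 = 1 / (12 * x * (x + 1)) := by
    have h1r : 1 - r = 4 * x * (x + 1) / (2 * x + 1) ^ 2 := by rw [hr]; field_simp; ring
    rw [h1r, hr]; field_simp; ring
  refine hsum ▸ hasSum_le (fun k => ?_) (hr ▸ hasSum_binet_sub_binet_add_one hx) hgeom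
  have : (3 : ℝ) ≤ 2 * ((k + 1 : ℕ) : ℝ) + 1 := by push_cast; linarith [k.cast_nonneg (α := ℝ)]
  rw [one_div_mul_eq_div]
  exact div_le_div_of_nonneg_left (by positivity) (by norm_num) this

lemma binet_natCast_add_one (m : ℕ) :
    binet (m + 1) = log (Stirling.stirlingSeq (m + 1)) - log π / 2 := by
  have hm : (0 : ℝ) < m + 1 := by positivity
  rw [binet, Stirling.log_stirlingSeq_formula, Gamma_nat_eq_factorial, Nat.factorial_succ,
    Nat.cast_mul, Nat.cast_succ, log_mul hm.ne' (by positivity), log_mul two_ne_zero hm.ne',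
    log_div hm.ne' (exp_pos 1).ne', log_exp, log_mul two_ne_zero pi_ne_zero]
  ring

lemma tendsto_binet_natCast : Tendsto (fun n : ℕ => binet n) atTop (𝓝 0) := by
  rw [← tendsto_add_atTop_iff_nat 1]
  have hlog := ((continuousAt_log (sqrt_pos.mpr pi_pos).ne').tendsto.comp
    Stirling.tendsto_stirlingSeq_sqrt_pi).comp (tendsto_add_atTop_nat 1)
  have := hlog.sub_const (log π / 2)
  rw [log_sqrt pi_pos.le, sub_self] at this
  simpa [Function.comp_def, binet_natCast_add_one] using this

lemma tendsto_log_Gamma_add_sub_log_Gamma {x : ℝ} (hx : 0 < x) :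
    Tendsto (fun n : ℕ => log (Gamma (x + n)) - log (Gamma n) - x * log n) atTop (𝓝 0) := by
  rw [← tendsto_add_atTop_iff_nat 1]
  have hlogGammaSeq (n : ℕ) : log (Gamma (x + ↑(n + 1))) - log (Gamma ↑(n + 1)) - x * log ↑(n + 1)
      = log (Gamma x) - BohrMollerup.logGammaSeq x n - x * (log (n + 1) - log n) := by
    rw [BohrMollerup.f_add_nat_eq (f := fun y => log (Gamma y)) log_Gamma_add_one hx, Nat.cast_succ,
      Gamma_nat_eq_factorial, BohrMollerup.logGammaSeq]
    ring
  simp_rw [hlogGammaSeq]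
  simpa using ((tendsto_const_nhds (x := log (Gamma x))).sub
    (BohrMollerup.tendsto_log_gamma hx)).sub (tendsto_log_nat_add_one_sub_log.const_mul x)

lemma tendsto_binet_add_natCast {x : ℝ} (hx : 0 < x) :
    Tendsto (fun n : ℕ => binet (x + n)) atTop (𝓝 0) := by
  have hL : Tendsto (fun n : ℕ => log (1 + x / n)) atTop (𝓝 0) := by
    have := (tendsto_const_div_atTop_nhds_zero_nat x).const_add 1
    rw [add_zero] at this
    simpa [Function.comp_def] using (continuousAt_log one_ne_zero).tendsto.comp this
  have hnL : Tendsto (fun n : ℕ => n * log (1 + x / n)) atTop (𝓝 x) :=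
    (tendsto_mul_log_one_add_div_atTop x).comp tendsto_natCast_atTop_atTop
  have hsplit : ∀ᶠ n : ℕ in atTop, binet n + (log (Gamma (x + n)) - log (Gamma n) - x * log n)
      - (n * log (1 + x / n) + (x - 1 / 2) * log (1 + x / n)) + x = binet (x + n) := by
    filter_upwards [eventually_gt_atTop 0] with n hn
    have hn' : (0 : ℝ) < n := Nat.cast_pos.mpr hn
    have : log (x + n) = log n + log (1 + x / n) := by
      rw [← log_mul hn'.ne' (by positivity), mul_add, mul_div_cancel₀ _ hn'.ne', mul_one, add_comm]
    rw [binet, binet, this]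
    ring
  simpa using ((((tendsto_binet_natCast.add (tendsto_log_Gamma_add_sub_log_Gamma hx)).sub
    (hnL.add (hL.const_mul _))).add_const x).congr' hsplit)

lemma binet_le {x : ℝ} (hx : 0 < x) : binet x ≤ 1 / (12 * x) := by
  have hpos (n : ℕ) : 0 < x + n := by positivity
  have hmono : Monotone fun n : ℕ => binet (x + n) - 1 / (12 * (x + n)) := by
    refine monotone_nat_of_le_succ fun n => ?_
    have hy := hpos n
    have hstep := binet_sub_binet_add_one_le hy
    have : 1 / (12 * (x + n) * (x + n + 1)) = 1 / (12 * (x + n)) - 1 / (12 * (x + n + 1)) := by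
      field_simp; ring
    push_cast
    rw [← add_assoc]
    linarith
  have hlim : Tendsto (fun n : ℕ => binet (x + n) - 1 / (12 * (x + n))) atTop (𝓝 0) := by
    simpa using (tendsto_binet_add_natCast hx).sub ((tendsto_inv_atTop_zero.comp
      (tendsto_atTop_add_const_left _ x tendsto_natCast_atTop_atTop)).mul_const 12⁻¹)
  simpa using hmono.ge_of_tendsto hlim 0

theorem stmt19 (x : ℝ) (hx : 0 < x) :
    Real.Gamma (x + 1) <
      x ^ x / Real.exp x * Real.sqrt (2 * Real.pi * x) * Real.exp (trigamma x / 12) := by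
  have hbinet : binet x < trigamma x / 12 := by
    have h1 := binet_le hx
    have h2 := inv_lt_trigamma hx
    rw [one_div, mul_inv] at h1
    linarith
  have hlhs : Gamma (x + 1) = exp (binet x + ((x + 1 / 2) * log x - x + log (2 * π) / 2)) := by
    rw [← exp_log (Gamma_pos_of_pos (by linarith)), log_Gamma_add_one hx, binet]
    ring_nf
  have hrhs : x ^ x / exp x * sqrt (2 * π * x) * exp (trigamma x / 12)
      = exp (trigamma x / 12 + ((x + 1 / 2) * log x - x + log (2 * π) / 2)) := by
    rw [rpow_def_of_pos hx, sqrt_eq_rpow, rpow_def_of_pos (by positivity),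
      log_mul (by positivity) hx.ne', ← exp_sub, ← exp_add, ← exp_add]
    ring_nf
  rw [hlhs, hrhs, exp_lt_exp]
  linarith
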